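/- Let G be a finite group and x an involution of G (an element of order 2). Then the subgroup ⟨x⟩ generated by x is a perfect code of G if and only if x is not a square of G, i.e. there is no y ∈ G with y² = x. -/

import Mathlib

/-- The Cayley graph of a group `G` with connection set `S`: distinct vertices `x`, `y`
are adjacent iff `y * x⁻¹ ∈ S` (for inverse-closed `S` this relation is symmetric). -/
def cayley (G : Type*) [Group G] (S : Set G) : SimpleGraph G :=
  SimpleGraph.fromRel (fun x y => y * x⁻¹ ∈ S)

/-- `C` is a perfect code in the graph `Γ`: `C` is an independent set and every vertex
outside `C` is adjacent to exactly one vertex of `C`. -/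
def IsPerfectCode {V : Type*} (Γ : SimpleGraph V) (C : Set V) : Prop :=
  (∀ u ∈ C, ∀ v ∈ C, ¬ Γ.Adj u v) ∧ ∀ v ∉ C, ∃! u, u ∈ C ∧ Γ.Adj v u

/-- `C` is a perfect code of the group `G`: there is an inverse-closed `S ⊆ G` with
`1 ∉ S` such that `C` is a perfect code in `Cay(G, S)`. -/
def IsPerfectCodeOfGroup (G : Type*) [Group G] (C : Set G) : Prop :=
  ∃ S : Set G, S⁻¹ = S ∧ (1 : G) ∉ S ∧ IsPerfectCode (cayley G S) C

/-!
Write `C = ⟨x⟩ = {1, x}`. For an inverse-closed `S` with `1 ∉ S`, `C` is a perfect code in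
`Cay(G, S)` iff `x ∉ S` and every `g ∉ C` lies in exactly one of `S` and `S * x`.
If `y * y = x`, then `y * x = y⁻¹`, so `y` and `y * x` are both in `S` or both outside it.

Conversely, inversion and conjugation by `x` generate a Klein four-group `K` acting on `G`, and
adding right multiplication by `x` gives a dihedral group of order 8. Each dihedral orbit is
`K g ∪ (K g) * x`, and these two halves are disjoint precisely because no element squares to
`x`. Choosing a representative `r` of every dihedral orbit and putting `g ∉ C` into `S` when
`r ∈ K g` gives a connection set of the required kind.
-/

open Subgroup

section

variable {G : Type*} [Group G] {x : G}

theorem cayley_adj_iff {S : Set G} (hS : S⁻¹ = S) (h1 : (1 : G) ∉ S) {a b : G} :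
    (cayley G S).Adj a b ↔ a * b⁻¹ ∈ S := by
  have hmem : b * a⁻¹ ∈ S ↔ a * b⁻¹ ∈ S := by
    rw [← Set.inv_mem_inv, hS, mul_inv_rev, inv_inv]
  rw [cayley, SimpleGraph.fromRel_adj, hmem, or_self, and_iff_right_iff_imp]
  rintro h rfl
  exact h1 (by simpa using h)

theorem existsUnique_eq_or_eq_and_iff {α : Type*} {a b : α} {p : α → Prop} (hab : a ≠ b) :
    (∃! u, (u = a ∨ u = b) ∧ p u) ↔ Xor (p a) (p b) := by
  constructor
  · rintro ⟨u, ⟨rfl | rfl, hu⟩, huniq⟩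
    · exact Or.inl ⟨hu, fun hb => hab (huniq b ⟨Or.inr rfl, hb⟩).symm⟩
    · exact Or.inr ⟨hu, fun ha => hab (huniq a ⟨Or.inl rfl, ha⟩)⟩
  · rintro (⟨ha, hb⟩ | ⟨hb, ha⟩)
    · exact ⟨a, ⟨Or.inl rfl, ha⟩, by rintro u ⟨rfl | rfl, hu⟩ <;> tauto⟩
    · exact ⟨b, ⟨Or.inr rfl, hb⟩, by rintro u ⟨rfl | rfl, hu⟩ <;> tauto⟩

theorem mem_zpowers_iff_of_mul_self (hx : x * x = 1) {g : G} :
    g ∈ zpowers x ↔ g = 1 ∨ g = x := by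
  refine ⟨?_, by rintro (rfl | rfl) <;> simp⟩
  rintro ⟨k, rfl⟩
  dsimp only
  rw [zpow_eq_zpow_emod' k (n := 2) (by rw [sq, hx])]
  rcases Int.emod_two_eq k with h | h <;> simp [h]

theorem isPerfectCode_cayley_zpowers_iff (hx : x * x = 1) (hx1 : x ≠ 1) {S : Set G}
    (hS : S⁻¹ = S) (h1 : (1 : G) ∉ S) :
    IsPerfectCode (cayley G S) (zpowers x) ↔
      x ∉ S ∧ ∀ g ∉ zpowers x, Xor (g ∈ S) (g * x ∈ S) := by
  have hxinv : x⁻¹ = x := inv_eq_of_mul_eq_one_right hx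
  simp only [IsPerfectCode, SetLike.mem_coe, mem_zpowers_iff_of_mul_self hx,
    existsUnique_eq_or_eq_and_iff hx1.symm, cayley_adj_iff hS h1]
  simp [hxinv, hx, h1]

theorem isPerfectCodeOfGroup_zpowers_iff (hx : x * x = 1) (hx1 : x ≠ 1) :
    IsPerfectCodeOfGroup G (zpowers x) ↔ ∃ S : Set G, S⁻¹ = S ∧ (1 : G) ∉ S ∧
      x ∉ S ∧ ∀ g ∉ zpowers x, Xor (g ∈ S) (g * x ∈ S) := by
  refine exists_congr fun S => and_congr_right fun hS => and_congr_right fun h1 => ?_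
  exact isPerfectCode_cayley_zpowers_iff hx hx1 hS h1

theorem mul_self_ne_of_forall_xor {S : Set G} (hS : S⁻¹ = S) (hx : x * x = 1) (hx1 : x ≠ 1)
    (hxor : ∀ g ∉ zpowers x, Xor (g ∈ S) (g * x ∈ S)) (y : G) : y * y ≠ x := by
  intro hy
  have hy1 : y ≠ 1 := by rintro rfl; exact hx1 (by rw [← hy, mul_one])
  have hyx : y ∉ zpowers x := by
    rw [mem_zpowers_iff_of_mul_self hx]
    rintro (h | h)
    · exact hy1 h
    · exact hy1 (mul_eq_left.mp (hy.trans h.symm))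
  have hyy : y * x = y⁻¹ := by
    rw [eq_inv_iff_mul_eq_one, ← hx, ← hy]
    group
  have hinv : y⁻¹ ∈ S ↔ y ∈ S := by rw [← Set.mem_inv, hS]
  simpa [hyy, hinv] using hxor y hyx

theorem mul_mul_cancel_left_of_mul_self (hx : x * x = 1) (a : G) : x * (x * a) = a := by
  rw [← mul_assoc, hx, one_mul]

def conjInvOrbit (x g : G) : Set G := {g, x * g * x, g⁻¹, x * g⁻¹ * x}

theorem mem_conjInvOrbit_self (x g : G) : g ∈ conjInvOrbit x g := Set.mem_insert g _

theorem conjInvOrbit_inv (x g : G) : conjInvOrbit x g⁻¹ = conjInvOrbit x g := by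
  ext a
  simp only [conjInvOrbit, inv_inv, Set.mem_insert_iff, Set.mem_singleton_iff]
  tauto

theorem conjInvOrbit_conj (hx : x * x = 1) (g : G) :
    conjInvOrbit x (x * g * x) = conjInvOrbit x g := by
  have hxinv : x⁻¹ = x := inv_eq_of_mul_eq_one_right hx
  ext a
  simp only [conjInvOrbit, mul_inv_rev, hxinv, mul_assoc, hx, mul_one,
    mul_mul_cancel_left_of_mul_self hx, Set.mem_insert_iff, Set.mem_singleton_iff]
  tauto

theorem conjInvOrbit_eq_of_mem (hx : x * x = 1) {a g : G} (h : a ∈ conjInvOrbit x g) :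
    conjInvOrbit x a = conjInvOrbit x g := by
  simp only [conjInvOrbit, Set.mem_insert_iff, Set.mem_singleton_iff] at h
  rcases h with rfl | rfl | rfl | rfl
  · rfl
  · exact conjInvOrbit_conj hx g
  · exact conjInvOrbit_inv x g
  · rw [conjInvOrbit_conj hx, conjInvOrbit_inv]

theorem mul_notMem_conjInvOrbit_self (hx : x * x = 1) (hx1 : x ≠ 1)
    (hsq : ∀ y : G, y * y ≠ x) (g : G) : g * x ∉ conjInvOrbit x g := by
  simp only [conjInvOrbit, Set.mem_insert_iff, Set.mem_singleton_iff]
  rintro (h | h | h | h)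
  · exact hx1 (by simpa using h)
  · exact hx1 (by simpa using h)
  · apply hsq g
    rw [← inv_eq_of_mul_eq_one_right hx, eq_inv_iff_mul_eq_one, mul_assoc, h, mul_inv_cancel]
  · have hg : g = x * g⁻¹ := mul_right_cancel h
    apply hsq g
    calc g * g = x * g⁻¹ * g := by rw [← hg]
      _ = x := inv_mul_cancel_right x g

theorem mul_notMem_conjInvOrbit_of_mem (hx : x * x = 1) (hx1 : x ≠ 1)
    (hsq : ∀ y : G, y * y ≠ x) {a g : G} (h : a ∈ conjInvOrbit x g) :
    a * x ∉ conjInvOrbit x g :=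
  conjInvOrbit_eq_of_mem hx h ▸ mul_notMem_conjInvOrbit_self hx hx1 hsq a

theorem mul_mem_conjInvOrbit_mul (hx : x * x = 1) {a g : G} (h : a ∈ conjInvOrbit x g) :
    a * x ∈ conjInvOrbit x (g * x) := by
  have hxinv : x⁻¹ = x := inv_eq_of_mul_eq_one_right hx
  simp only [conjInvOrbit, Set.mem_insert_iff, Set.mem_singleton_iff] at h ⊢
  rcases h with rfl | rfl | rfl | rfl <;>
    simp only [mul_inv_rev, hxinv, mul_assoc, hx, mul_one, mul_mul_cancel_left_of_mul_self hx,
      true_or, or_true]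

theorem mem_conjInvOrbit_mul_iff (hx : x * x = 1) {a g : G} :
    a ∈ conjInvOrbit x (g * x) ↔ a * x ∈ conjInvOrbit x g := by
  refine ⟨fun h => ?_, fun h => ?_⟩ <;>
    simpa [mul_assoc, hx] using mul_mem_conjInvOrbit_mul hx h

def dihedralOrbit (x g : G) : Set G := {a | a ∈ conjInvOrbit x g ∨ a * x ∈ conjInvOrbit x g}

theorem mem_dihedralOrbit_self (x g : G) : g ∈ dihedralOrbit x g :=
  Or.inl (mem_conjInvOrbit_self x g)

theorem dihedralOrbit_inv (x g : G) : dihedralOrbit x g⁻¹ = dihedralOrbit x g := by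
  simp only [dihedralOrbit, conjInvOrbit_inv]

theorem dihedralOrbit_mul (hx : x * x = 1) (g : G) :
    dihedralOrbit x (g * x) = dihedralOrbit x g := by
  ext a
  simp only [dihedralOrbit, Set.mem_ofPred_eq, mem_conjInvOrbit_mul_iff hx, mul_assoc, hx,
    mul_one]
  exact or_comm

/-- Chosen from the orbit as a set, so that elements of the same orbit get the same
representative. -/
noncomputable def dihedralOrbitRep (x g : G) : G := Classical.epsilon (· ∈ dihedralOrbit x g)

theorem dihedralOrbitRep_mem (x g : G) : dihedralOrbitRep x g ∈ dihedralOrbit x g :=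
  Classical.epsilon_spec ⟨g, mem_dihedralOrbit_self x g⟩

theorem dihedralOrbitRep_inv (x g : G) : dihedralOrbitRep x g⁻¹ = dihedralOrbitRep x g := by
  rw [dihedralOrbitRep, dihedralOrbit_inv, dihedralOrbitRep]

theorem dihedralOrbitRep_mul (hx : x * x = 1) (g : G) :
    dihedralOrbitRep x (g * x) = dihedralOrbitRep x g := by
  rw [dihedralOrbitRep, dihedralOrbit_mul hx, dihedralOrbitRep]

def connectionSet (x : G) : Set G :=
  {g | g ∉ zpowers x ∧ dihedralOrbitRep x g ∈ conjInvOrbit x g}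

theorem connectionSet_inv (x : G) : (connectionSet x)⁻¹ = connectionSet x := by
  ext g
  simp only [connectionSet, Set.mem_inv, Set.mem_ofPred_eq, inv_mem_iff, dihedralOrbitRep_inv,
    conjInvOrbit_inv]

theorem xor_mem_connectionSet (hx : x * x = 1) (hx1 : x ≠ 1) (hsq : ∀ y : G, y * y ≠ x)
    {g : G} (hg : g ∉ zpowers x) : Xor (g ∈ connectionSet x) (g * x ∈ connectionSet x) := by
  have hgx : g * x ∉ zpowers x := by rwa [mul_mem_cancel_right (mem_zpowers x)]
  simp only [connectionSet, Set.mem_ofPred_eq, hg, hgx, not_false_eq_true, true_and,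
    dihedralOrbitRep_mul hx, mem_conjInvOrbit_mul_iff hx]
  rw [xor_iff_or_and_not_and]
  exact ⟨dihedralOrbitRep_mem x g,
    fun ⟨h, hmul⟩ => mul_notMem_conjInvOrbit_of_mem hx hx1 hsq h hmul⟩

end

theorem involution_subgroup_perfect_code_iff_general (G : Type*) [Group G]
    (x : G) (hx : orderOf x = 2) :
    IsPerfectCodeOfGroup G ((Subgroup.zpowers x) : Set G) ↔ ¬ ∃ y : G, y ^ 2 = x := by
  have hx2 : x * x = 1 := by rw [← sq, ← hx, pow_orderOf_eq_one]
  have hx1 : x ≠ 1 := by rintro rfl; simp at hx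
  simp only [sq, not_exists]
  rw [isPerfectCodeOfGroup_zpowers_iff hx2 hx1]
  constructor
  · rintro ⟨S, hS, -, -, hxor⟩
    exact mul_self_ne_of_forall_xor hS hx2 hx1 hxor
  · intro hsq
    refine ⟨connectionSet x, connectionSet_inv x, fun h => h.1 (one_mem _),
      fun h => h.1 (mem_zpowers x), fun g hg => xor_mem_connectionSet hx2 hx1 hsq hg⟩

/-- For an involution `x` of a finite group `G`, the subgroup `⟨x⟩` is a perfect code
of `G` iff `x` is not a square of `G`. -/
theorem involution_subgroup_perfect_code_iff (G : Type*) [Group G] [Fintype G]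
    (x : G) (hx : orderOf x = 2) :
    IsPerfectCodeOfGroup G ((Subgroup.zpowers x) : Set G) ↔ ¬ ∃ y : G, y ^ 2 = x :=
  involution_subgroup_perfect_code_iff_general G x hx
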